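/- Let A : (1/2, ∞) → ℝ be differentiable with A(c) → 0 as c → (1/2)⁺, and suppose 1 + 2A(c) − c − c A′(c) < 0 for all c > 1/2. Then A(c) > c − 1/2 for all c > 1/2. -/

import Mathlib

open MeasureTheory Real Filter

/-- `k`-th Fourier coefficient of a (2π-periodic) real-valued function on `𝕋 = [-π, π]`. -/
noncomputable def fcP (g : ℝ → ℝ) (k : ℤ) : ℂ :=
  (1 / (2 * (π : ℂ))) * ∫ x in (-π)..π, (g x : ℂ) * Complex.exp (-Complex.I * (k : ℂ) * (x : ℂ))

/-- The fractional derivative `D^s`, the Fourier multiplier with symbol `|k|^s`. -/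
noncomputable def Dop (s : ℝ) (g : ℝ → ℝ) : ℝ → ℝ := fun x =>
  (∑' k : ℤ, ((|(k : ℝ)| ^ s : ℝ) : ℂ) * fcP g k *
    Complex.exp (Complex.I * (k : ℂ) * (x : ℂ))).re

/-- Membership in the periodic Sobolev space `H^r_per(𝕋)`. -/
def inHper (r : ℝ) (g : ℝ → ℝ) : Prop :=
  Function.Periodic g (2 * π) ∧
  IntervalIntegrable (fun x => (g x) ^ 2) volume (-π) π ∧
  Summable (fun k : ℤ => (1 + (k : ℝ) ^ 2) ^ r * ‖fcP g k‖ ^ 2)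

/-- The `H^r_per` norm. -/
noncomputable def HperNorm (r : ℝ) (g : ℝ → ℝ) : ℝ :=
  (∑' k : ℤ, (1 + (k : ℝ) ^ 2) ^ r * ‖fcP g k‖ ^ 2) ^ ((1 : ℝ) / 2)

/-- The functional `B_c(u) = (1/2)∫ c (D^{α/2}u)² + (c-1)u²`. -/
noncomputable def Bfun (α c : ℝ) (u : ℝ → ℝ) : ℝ :=
  (1 / 2) * ∫ x in (-π)..π, (c * (Dop (α / 2) u x) ^ 2 + (c - 1) * (u x) ^ 2)

/-- The constraint set `Y₀ = {u ∈ H^{α/2}_per : ∫u³ = τ, ∫u = 0}`. -/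
def Y0 (α τ : ℝ) : Set (ℝ → ℝ) :=
  {u | inHper (α / 2) u ∧ (∫ x in (-π)..π, (u x) ^ 3) = τ ∧ (∫ x in (-π)..π, u x) = 0}

/-- `q_c = inf_{u ∈ Y₀} B_c(u)`. -/
noncomputable def qfun (α τ c : ℝ) : ℝ := sInf (Bfun α c '' Y0 α τ)

/-- Even, single-lobe profile: one maximum (at `x = 0`) and one minimum on `𝕋`. -/
def SingleLobe (φ : ℝ → ℝ) : Prop :=
  (∀ x, φ (-x) = φ x) ∧ StrictAntiOn φ (Set.Icc 0 π)

/-- The linearized operator `L = c D^α + (c-1) - φ`. -/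
noncomputable def Lop (α c : ℝ) (φ f : ℝ → ℝ) : ℝ → ℝ := fun x =>
  c * Dop α f x + (c - 1) * f x - φ x * f x

/-- `L̃ = (1/c) L`. -/
noncomputable def Ltil (α c : ℝ) (φ f : ℝ → ℝ) : ℝ → ℝ := fun x =>
  (1 / c) * Lop α c φ f x

/-- The restricted operator `L|_{X₀} = L + (1/2π)⟨φ, ·⟩`. -/
noncomputable def LX0 (α c : ℝ) (φ f : ℝ → ℝ) : ℝ → ℝ := fun x =>
  Lop α c φ f x + (1 / (2 * π)) * ∫ y in (-π)..π, φ y * f y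

/-- `n(T) = n` : the number of negative eigenvalues of the self-adjoint operator `T`
(counted with multiplicity), formalized as the Morse index of the quadratic form `⟨Tf, f⟩`. -/
def NegCount (α : ℝ) (T : (ℝ → ℝ) → (ℝ → ℝ)) (n : ℕ) : Prop :=
  IsGreatest {m : ℕ | ∃ W : Submodule ℝ (ℝ → ℝ), Module.finrank ℝ W = m ∧
    ∀ f ∈ W, inHper α f ∧ (f ≠ 0 → (∫ x in (-π)..π, T f x * f x) < 0)} n

/-- `z(T) = m` : the kernel of `T` (in `H^α_per`) is an `m`-dimensional subspace. -/
def KerDim (α : ℝ) (T : (ℝ → ℝ) → (ℝ → ℝ)) (m : ℕ) : Prop :=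
  ∃ W : Submodule ℝ (ℝ → ℝ), Module.finrank ℝ W = m ∧
    (W : Set (ℝ → ℝ)) = {f | inHper α f ∧ ∀ x, T f x = 0}

/-- `z(L|_{X₀}) = m`. -/
def KerDimX0 (α c : ℝ) (φ : ℝ → ℝ) (m : ℕ) : Prop :=
  ∃ W : Submodule ℝ (ℝ → ℝ), Module.finrank ℝ W = m ∧
    (W : Set (ℝ → ℝ)) =
      {f | inHper α f ∧ (∫ x in (-π)..π, f x) = 0 ∧ ∀ x, LX0 α c φ f x = 0}

/-- `ker (L|_{X₀}) = span {φ'}`. -/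
def KerIsDerivSpan (α c : ℝ) (φ : ℝ → ℝ) : Prop :=
  {f : ℝ → ℝ | inHper α f ∧ (∫ x in (-π)..π, f x) = 0 ∧ ∀ x, LX0 α c φ f x = 0}
    = Set.range (fun t : ℝ => (fun x => t * deriv φ x))

/-- `lam` is an eigenvalue of `L` on `L²_per` with domain `H^α_per`. -/
def IsEig (α c : ℝ) (φ : ℝ → ℝ) (lam : ℝ) : Prop :=
  ∃ f : ℝ → ℝ, inHper α f ∧ f ≠ 0 ∧ ∀ x, Lop α c φ f x = lam * f x

/-- The `L^p` norm on `[-π, π]`. -/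
noncomputable def LpNorm (p : ℝ) (f : ℝ → ℝ) : ℝ :=
  (∫ x in (-π)..π, |f x| ^ p) ^ (1 / p)

/-- `V = {f ∈ L³_per ∩ X₀ : f even and real-valued}`. -/
def memV (f : ℝ → ℝ) : Prop :=
  Function.Periodic f (2 * π) ∧ (∀ x, f (-x) = f x) ∧
  IntervalIntegrable (fun x => |f x| ^ (3 : ℝ)) volume (-π) π ∧
  (∫ x in (-π)..π, f x) = 0

/-- The traveling wave equation `c D^α φ + (c-1)φ = (1/2)Π₀φ²` (projected form). -/
def TWeq (α c : ℝ) (φ : ℝ → ℝ) : Prop :=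
  ∀ x, c * Dop α φ x + (c - 1) * φ x
    = (1 / 2) * ((φ x) ^ 2 - (1 / (2 * π)) * ∫ y in (-π)..π, (φ y) ^ 2)

/-- A `C¹` map `a ∈ I ↦ (Φ a, cc a) ∈ V × ℝ`, where `V` carries the `L³` norm. -/
def C1Branch (I : Set ℝ) (Φ : ℝ → ℝ → ℝ) (cc : ℝ → ℝ) : Prop :=
  ∃ dΦ : ℝ → ℝ → ℝ, ∃ dc : ℝ → ℝ,
    (∀ a ∈ I, Tendsto
        (fun b => LpNorm 3 (fun x => Φ b x - Φ a x - (b - a) * dΦ a x) / |b - a|)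
        (nhdsWithin a (I \ {a})) (nhds 0)) ∧
    (∀ a ∈ I, ∀ ε > 0, ∃ η > 0, ∀ b ∈ I, |b - a| < η →
      LpNorm 3 (fun x => dΦ b x - dΦ a x) < ε) ∧
    (∀ a ∈ I, HasDerivWithinAt cc (dc a) I a) ∧ ContinuousOn dc I

/-- A `C¹` branch of traveling-wave solutions on `[α₀, q)` with fixed cubic integral. -/
def BranchOn (α₀ q : ℝ) (Φ : ℝ → ℝ → ℝ) (cc : ℝ → ℝ) (φ₀ : ℝ → ℝ) : Prop :=
  C1Branch (Set.Ico α₀ q) Φ cc ∧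
  ∀ a ∈ Set.Ico α₀ q,
    memV (Φ a) ∧ 1 / 2 < cc a ∧ TWeq a (cc a) (Φ a) ∧ KerDimX0 a (cc a) (Φ a) 1 ∧
    (∫ x in (-π)..π, (Φ a x) ^ 3) = ∫ x in (-π)..π, (φ₀ x) ^ 3

/-- `k`-th Fourier coefficient of a complex-valued function. -/
noncomputable def fcC (g : ℝ → ℂ) (k : ℤ) : ℂ :=
  (1 / (2 * (π : ℂ))) * ∫ x in (-π)..π, g x * Complex.exp (-Complex.I * (k : ℂ) * (x : ℂ))

/-- `D^s` on complex-valued functions. -/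
noncomputable def DopC (s : ℝ) (g : ℝ → ℂ) : ℝ → ℂ := fun x =>
  ∑' k : ℤ, ((|(k : ℝ)| ^ s : ℝ) : ℂ) * fcC g k * Complex.exp (Complex.I * (k : ℂ) * (x : ℂ))

/-- `J = (1 + D^α)⁻¹ ∂ₓ`, the Fourier multiplier with symbol `ik/(1 + |k|^α)`. -/
noncomputable def Jop (α : ℝ) (g : ℝ → ℂ) : ℝ → ℂ := fun x =>
  ∑' k : ℤ, (Complex.I * (k : ℂ) / (1 + ((|(k : ℝ)| ^ α : ℝ) : ℂ))) * fcC g k *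
    Complex.exp (Complex.I * (k : ℂ) * (x : ℂ))

/-- Membership in the complex periodic Sobolev space `H^r_per(𝕋)`. -/
def inHperC (r : ℝ) (g : ℝ → ℂ) : Prop :=
  Function.Periodic g (2 * π) ∧
  IntervalIntegrable (fun x => ‖g x‖ ^ 2) volume (-π) π ∧
  Summable (fun k : ℤ => (1 + (k : ℝ) ^ 2) ^ r * ‖fcC g k‖ ^ 2)

/-- `L|_{X₀}` acting on complex-valued functions. -/
noncomputable def LX0C (α c : ℝ) (φ : ℝ → ℝ) (f : ℝ → ℂ) : ℝ → ℂ := fun x =>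
  (c : ℂ) * DopC α f x + ((c : ℂ) - 1) * f x - (φ x : ℂ) * f x +
    (1 / (2 * (π : ℂ))) * ∫ y in (-π)..π, (φ y : ℂ) * f y

/-- Spectral stability of the wave `φ`: every eigenvalue of `J L|_{X₀}` on `X₀` is
purely imaginary. -/
def SpectrallyStable (α c : ℝ) (φ : ℝ → ℝ) : Prop :=
  ∀ lam : ℂ, ∀ f : ℝ → ℂ, inHperC α f → (∫ x in (-π)..π, f x) = 0 → f ≠ 0 →
    (∀ x, Jop α (LX0C α c φ f) x = lam * f x) → lam.re = 0

/-- The Fourier multiplier `K` with symbol `-ik/(1 + |k|^α)` from the Duhamel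
formulation of the fBBM equation. -/
noncomputable def Kop (α : ℝ) (v : ℝ → ℝ) : ℝ → ℝ := fun x =>
  (∑' k : ℤ, (-Complex.I * (k : ℂ) / (1 + ((|(k : ℝ)| ^ α : ℝ) : ℂ))) * fcP v k *
    Complex.exp (Complex.I * (k : ℂ) * (x : ℂ))).re

/-- `t ∈ I ↦ u(t) ∈ H^s_per` is continuous. -/
def ContInH (s : ℝ) (I : Set ℝ) (u : ℝ → ℝ → ℝ) : Prop :=
  ∀ t ∈ I, ∀ ε > 0, ∃ η > 0, ∀ t' ∈ I, |t' - t| < η →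
    HperNorm s (fun x => u t' x - u t x) < ε

/-- The energy `E`. -/
noncomputable def Efun (α : ℝ) (u : ℝ → ℝ) : ℝ :=
  (1 / 2) * ∫ x in (-π)..π, ((Dop (α / 2) u x) ^ 2 - (1 / 3) * (u x) ^ 3)

/-- The momentum `P`. -/
noncomputable def Pfun (α : ℝ) (u : ℝ → ℝ) : ℝ :=
  (1 / 2) * ∫ x in (-π)..π, ((Dop (α / 2) u x) ^ 2 + (u x) ^ 2)

/-- The mass `M`. -/
noncomputable def Mfun (u : ℝ → ℝ) : ℝ := ∫ x in (-π)..π, u x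

/-! The hypothesis says exactly that the quotient `(A c - (c - 1/2)) / c ^ 2` has derivative
`-(1 + 2 A c - c - c A' c) / c ^ 3 > 0`, so this quotient increases strictly on `(1/2, ∞)`
from its limit `0` at `1/2`. -/

open Set Topology

theorem StrictMonoOn.lt_of_tendsto_nhdsGT {α β : Type*} [LinearOrder α] [TopologicalSpace α]
    [OrderTopology α] [DenselyOrdered α] [LinearOrder β] [TopologicalSpace β]
    [ClosedIicTopology β] {f : α → β} {a x : α} {l : β} (hf : StrictMonoOn f (Ioi a))
    (hl : Tendsto f (𝓝[>] a) (𝓝 l)) (hx : a < x) : l < f x := by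
  have hne : (𝓝[>] a).NeBot := nhdsGT_neBot_of_exists_gt ⟨x, hx⟩
  obtain ⟨b, hab, hbx⟩ := exists_between hx
  have hle : ∀ᶠ y in 𝓝[>] a, f y ≤ f b := by
    filter_upwards [Ioo_mem_nhdsGT hab] with y hy
    exact (hf hy.1 hab hy.2).le
  exact (le_of_tendsto hl hle).trans_lt (hf hab hx hbx)

theorem hasDerivAt_sub_div_sq {A : ℝ → ℝ} {a c : ℝ} (hA : HasDerivAt A a c) (hc : c ≠ 0) :
    HasDerivAt (fun c => (A c - (c - 1 / 2)) / c ^ 2) (-(1 + 2 * A c - c - c * a) / c ^ 3) c := by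
  have hnum : HasDerivAt (fun c => A c - (c - 1 / 2)) (a - 1) c :=
    hA.sub ((hasDerivAt_id' c).sub_const (1 / 2))
  refine (hnum.div (hasDerivAt_pow 2 c) (pow_ne_zero 2 hc)).congr_deriv ?_
  field_simp
  ring

theorem strictMonoOn_sub_div_sq {A A' : ℝ → ℝ}
    (hdiff : ∀ c, 1 / 2 < c → HasDerivAt A (A' c) c)
    (hineq : ∀ c, 1 / 2 < c → 1 + 2 * A c - c - c * A' c < 0) :
    StrictMonoOn (fun c => (A c - (c - 1 / 2)) / c ^ 2) (Ioi (1 / 2)) := by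
  have hderiv (x : ℝ) (hx : x ∈ Ioi (1 / 2 : ℝ)) := hasDerivAt_sub_div_sq (hdiff x hx)
    (by linarith [mem_Ioi.mp hx])
  refine strictMonoOn_of_hasDerivWithinAt_pos
    (f' := fun x => -(1 + 2 * A x - x - x * A' x) / x ^ 3) (convex_Ioi _)
    (fun x hx => (hderiv x hx).continuousAt.continuousWithinAt)
    (fun x hx => (hderiv x (interior_subset hx)).hasDerivWithinAt) fun x hx => ?_
  have hx' : 1 / 2 < x := interior_subset hx
  have hx0 : 0 < x := by linarith
  exact div_pos (neg_pos.mpr (hineq x hx')) (by positivity)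

theorem tendsto_sub_div_sq_nhdsGT {A : ℝ → ℝ} (hlim : Tendsto A (𝓝[>] (1 / 2)) (𝓝 0)) :
    Tendsto (fun c => (A c - (c - 1 / 2)) / c ^ 2) (𝓝[>] (1 / 2)) (𝓝 0) := by
  have hid : Tendsto (fun c : ℝ => c) (𝓝[>] (1 / 2)) (𝓝 (1 / 2)) :=
    tendsto_nhdsWithin_of_tendsto_nhds tendsto_id
  convert (hlim.sub (hid.sub_const (1 / 2))).div (hid.pow 2) (by norm_num) using 2
  · rfl
  · norm_num

/-- if `A` is differentiable on `(1/2, ∞)`, `A(c) → 0` as `c → (1/2)⁺`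
and `1 + 2A(c) - c - cA'(c) < 0` for all `c > 1/2`, then `A(c) > c - 1/2`. -/
theorem stmt15 (A A' : ℝ → ℝ)
    (hdiff : ∀ c, 1 / 2 < c → HasDerivAt A (A' c) c)
    (hlim : Tendsto A (nhdsWithin (1 / 2) (Set.Ioi (1 / 2))) (nhds 0))
    (hineq : ∀ c, 1 / 2 < c → 1 + 2 * A c - c - c * A' c < 0) :
    ∀ c, 1 / 2 < c → c - 1 / 2 < A c := by
  intro c hc
  have hquot : 0 < (A c - (c - 1 / 2)) / c ^ 2 :=
    (strictMonoOn_sub_div_sq hdiff hineq).lt_of_tendsto_nhdsGT (tendsto_sub_div_sq_nhdsGT hlim) hc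
  have hc0 : 0 < c := by linarith
  linarith [(div_pos_iff_of_pos_right (by positivity : (0 : ℝ) < c ^ 2)).mp hquot]
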